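/- arXiv:nlin/0606018 — 6 statements merged into one kernel-verified Lean document; each statement's English description precedes it below -/
import Mathlib

section
/- Let β ≠ 0, ν, C₀ be real constants and let Y : ℝ → ℝ be a differentiable function satisfying the Riccati equation Y' + Y² - ν²/(100β²) = 0. Define w(z) = C₀ + 3ν²/(25β) - (12ν/5)·Y(z) - 12β·Y(z)². Then w satisfies the traveling-wave Korteweg–de Vries–Burgers equation β·w'' - ν·w' + (1/2)w² - C₀·w + C₁ = 0, where C₁ = (1/2)C₀² - 18ν⁴/(625β²). -/
theorem kdv_burgers_riccati (β ν C₀ : ℝ) (hβ : β ≠ 0) (Y : ℝ → ℝ)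
    (hY : ContDiff ℝ (⊤ : ℕ∞) Y)
    (hric : ∀ z, deriv Y z + (Y z) ^ 2 - ν ^ 2 / (100 * β ^ 2) = 0)
    (w : ℝ → ℝ)
    (hw : ∀ z, w z = C₀ + 3 * ν ^ 2 / (25 * β) - (12 * ν / 5) * Y z - 12 * β * (Y z) ^ 2) :
    ∀ z, β * deriv (deriv w) z - ν * deriv w z + (1 / 2) * (w z) ^ 2 - C₀ * w z
      + ((1 / 2) * C₀ ^ 2 - 18 * ν ^ 4 / (625 * β ^ 2)) = 0 := by
  set k : ℝ := ν ^ 2 / (100 * β ^ 2) with hk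
  have hYd : Differentiable ℝ Y := hY.differentiable (by simp)
  have hY' : ∀ z, HasDerivAt Y (k - Y z ^ 2) z := by
    intro z
    have h := (hYd z).hasDerivAt
    have : deriv Y z = k - Y z ^ 2 := by have := hric z; linarith
    rwa [this] at h
  have hweq : w = fun z => C₀ + 3 * ν ^ 2 / (25 * β) - (12 * ν / 5) * Y z
      - 12 * β * (Y z) ^ 2 := funext hw
  have hw' : ∀ z, HasDerivAt w
      ((-(12 * ν / 5) - 24 * β * Y z) * (k - Y z ^ 2)) z := by
    intro z
    rw [hweq]
    have h1 := ((hY' z).const_mul (12 * ν / 5))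
    have h2 := (((hY' z).pow 2).const_mul (12 * β))
    have h := ((hasDerivAt_const z (C₀ + 3 * ν ^ 2 / (25 * β))).sub h1).sub h2
    exact h.congr_deriv (by ring)
  have hdw : deriv w = fun z => (-(12 * ν / 5) - 24 * β * Y z) * (k - Y z ^ 2) :=
    funext fun z => (hw' z).deriv
  have hw'' : ∀ z, HasDerivAt (deriv w)
      ((-24 * β * (k - Y z ^ 2)) * (k - Y z ^ 2)
        + (-(12 * ν / 5) - 24 * β * Y z) * (-(2 * Y z * (k - Y z ^ 2)))) z := by
    intro z
    rw [hdw]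
    have h1 : HasDerivAt (fun z => -(12 * ν / 5) - 24 * β * Y z)
        (-24 * β * (k - Y z ^ 2)) z := by
      have := ((hY' z).const_mul (24 * β)).const_sub (-(12 * ν / 5))
      exact this.congr_deriv (by ring)
    have h2 : HasDerivAt (fun z => k - Y z ^ 2) (-(2 * Y z * (k - Y z ^ 2))) z := by
      have := ((hY' z).pow 2).const_sub k
      exact this.congr_deriv (by ring)
    exact h1.mul h2
  intro z
  rw [(hw'' z).deriv, hdw, hw z, hk]
  field_simp
  ring
end

section
/- Let β ≠ 0, ν, C₀, φ₀ be real constants. The function w(z) = C₀ + 6ν²/(25β) - (3ν²/(25β))·(1 + tanh(ν(z + φ₀)/(10β)))² satisfies the equation β·w'' - ν·w' + (1/2)w² - C₀·w + C₁ = 0 with C₁ = (1/2)C₀² - 18ν⁴/(625β²). -/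
/-! Put `T = tanh (c z + d)` with `c = ν / (10 β)`. Since `T' = c (1 - T²)`, the first two
derivatives of `(1 + T)²` are the polynomials `2c (1 + T)² (1 - T)` and
`2c² (1 + T)² (1 - T) (1 - 3T)` in `T`. Substituting them turns the travelling-wave equation into a
polynomial identity in `T`, whose coefficients all vanish for the amplitude `3ν² / (25β)`. -/

open Real

theorem Real.hasDerivAt_tanh (x : ℝ) : HasDerivAt tanh (1 - tanh x ^ 2) x := by
  have hcosh : cosh x ≠ 0 := (cosh_pos x).ne'
  have h := (hasDerivAt_sinh x).div (hasDerivAt_cosh x) hcosh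
  rw [show tanh = fun y => sinh y / cosh y from funext tanh_eq_sinh_div_cosh]
  refine h.congr_deriv ?_
  field_simp

section Kink

variable (c d x : ℝ)

theorem hasDerivAt_tanh_mul_add :
    HasDerivAt (fun z => tanh (c * z + d)) ((1 - tanh (c * x + d) ^ 2) * c) x := by
  have h := ((hasDerivAt_id x).const_mul c).add_const d
  simp only [id, mul_one] at h
  exact (hasDerivAt_tanh _).comp x h

theorem hasDerivAt_one_add_tanh_mul_add_sq :
    HasDerivAt (fun z => (1 + tanh (c * z + d)) ^ 2)
      (2 * c * (1 + tanh (c * x + d)) ^ 2 * (1 - tanh (c * x + d))) x := by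
  refine (((hasDerivAt_tanh_mul_add c d x).const_add 1).pow 2).congr_deriv ?_
  ring

theorem hasDerivAt_deriv_one_add_tanh_mul_add_sq :
    HasDerivAt (fun z => 2 * c * (1 + tanh (c * z + d)) ^ 2 * (1 - tanh (c * z + d)))
      (2 * c ^ 2 * (1 + tanh (c * x + d)) ^ 2 * (1 - tanh (c * x + d))
        * (1 - 3 * tanh (c * x + d))) x := by
  have hsq := (hasDerivAt_one_add_tanh_mul_add_sq c d x).const_mul (2 * c)
  refine (hsq.mul ((hasDerivAt_tanh_mul_add c d x).const_sub 1)).congr_deriv ?_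
  ring

end Kink

theorem kdv_burgers_kink (β ν C₀ φ₀ : ℝ) (hβ : β ≠ 0) (w : ℝ → ℝ)
    (hw : ∀ z, w z = C₀ + 6 * ν ^ 2 / (25 * β)
      - (3 * ν ^ 2 / (25 * β)) * (1 + Real.tanh (ν * (z + φ₀) / (10 * β))) ^ 2) :
    ∀ z, β * deriv (deriv w) z - ν * deriv w z + (1 / 2) * (w z) ^ 2 - C₀ * w z
      + ((1 / 2) * C₀ ^ 2 - 18 * ν ^ 4 / (625 * β ^ 2)) = 0 := by
  intro z
  set c := ν / (10 * β)
  set A := C₀ + 6 * ν ^ 2 / (25 * β)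
  set B := 3 * ν ^ 2 / (25 * β)
  have hw_eq : w = fun z => A - B * (1 + tanh (c * z + c * φ₀)) ^ 2 := by
    funext z
    rw [hw, mul_div_right_comm, ← mul_add]
  have hw' : ∀ z, HasDerivAt w
      (-(B * (2 * c * (1 + tanh (c * z + c * φ₀)) ^ 2 * (1 - tanh (c * z + c * φ₀))))) z := by
    rw [hw_eq]
    exact fun z => ((hasDerivAt_one_add_tanh_mul_add_sq c _ z).const_mul B).const_sub A
  have hw'' : HasDerivAt (deriv w)
      (-(B * (2 * c ^ 2 * (1 + tanh (c * z + c * φ₀)) ^ 2 * (1 - tanh (c * z + c * φ₀))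
        * (1 - 3 * tanh (c * z + c * φ₀))))) z := by
    rw [funext fun z => (hw' z).deriv]
    exact ((hasDerivAt_deriv_one_add_tanh_mul_add_sq c _ z).const_mul B).neg
  rw [hw''.deriv, (hw' z).deriv, hw_eq]
  simp only [c, A, B]
  field_simp
  ring
end

section
/- Let m be a real number with m ∉ {0, -1, -3/2, -3} and 2m² + 18m + 27 > 0, and let α ≠ 0. Set σ = 3(3+m)/√(2m²+18m+27), B = -σ/(3+m), C₀ = B(B² + σB + 1), and let A be a real number with A³·(2m+3)(m+3)(m+1) + 9α = 0. If y : ℝ → ℝ is a positive differentiable function satisfying the first-order equation y' = A·y^((m+3)/3) + B·y, then y satisfies the third-order equation y''' + σ·y'' + y' - C₀·y + (α/(m+1))·y^(m+1) = 0. -/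
lemma key_algebra (m σ B C₀ A γ u s w v q : ℝ)
    (hσ : σ = -B * (3 + m))
    (hB2 : B ^ 2 * (2 * m ^ 2 + 18 * m + 27) = 9)
    (hC₀ : C₀ = B * (B ^ 2 + σ * B + 1))
    (hA : A ^ 3 * (2 * m + 3) * (m + 3) + 9 * γ = 0)
    (hw : w = u * s) (hv : v = u * w) (hq : q = v * w * w) :
    (A * ((A * ((A * v + B * u) * ((m + 3) / 3) * w) + B * (A * v + B * u)) * ((m + 3) / 3) * w
        + (A * v + B * u) * ((m + 3) / 3) * ((A * v + B * u) * ((m + 3) / 3 - 1) * s))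
      + B * (A * ((A * v + B * u) * ((m + 3) / 3) * w) + B * (A * v + B * u)))
    + σ * (A * ((A * v + B * u) * ((m + 3) / 3) * w) + B * (A * v + B * u))
    + (A * v + B * u) - C₀ * u + γ * q = 0 := by
  subst hσ hC₀ hw hv hq
  linear_combination (u ^ 4 * s ^ 3 / 9) * hA - (A * u ^ 2 * s / 9) * hB2

theorem gen_kuramoto_sivashinsky_simplest (m α σ B C₀ A : ℝ)
    (hm0 : m ≠ 0) (hm1 : m ≠ -1) (hm2 : m ≠ -3 / 2) (hm3 : m ≠ -3)
    (hpos : 2 * m ^ 2 + 18 * m + 27 > 0) (hα : α ≠ 0)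
    (hσ : σ = 3 * (3 + m) / Real.sqrt (2 * m ^ 2 + 18 * m + 27))
    (hB : B = -σ / (3 + m))
    (hC₀ : C₀ = B * (B ^ 2 + σ * B + 1))
    (hA : A ^ 3 * (2 * m + 3) * (m + 3) * (m + 1) + 9 * α = 0)
    (y : ℝ → ℝ) (hy : ContDiff ℝ (⊤ : ℕ∞) y) (hypos : ∀ z, y z > 0)
    (heq : ∀ z, deriv y z = A * (y z) ^ ((m + 3) / 3 : ℝ) + B * y z) :
    ∀ z, deriv^[3] y z + σ * deriv (deriv y) z + deriv y z - C₀ * y z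
      + (α / (m + 1)) * (y z) ^ ((m + 1) : ℝ) = 0 := by
  have hm1' : m + 1 ≠ 0 := fun h => hm1 (by linarith)
  have hm3' : m + 3 ≠ 0 := fun h => hm3 (by linarith)
  have hm3'' : (3 : ℝ) + m ≠ 0 := fun h => hm3 (by linarith)
  set p : ℝ := (m + 3) / 3 with hp
  -- constants facts
  have hsq : Real.sqrt (2 * m ^ 2 + 18 * m + 27) ^ 2 = 2 * m ^ 2 + 18 * m + 27 :=
    Real.sq_sqrt hpos.le
  have hsne : Real.sqrt (2 * m ^ 2 + 18 * m + 27) ≠ 0 :=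
    (Real.sqrt_pos.mpr hpos).ne'
  have hσ' : σ = -B * (3 + m) := by rw [hB]; field_simp
  have hB2 : B ^ 2 * (2 * m ^ 2 + 18 * m + 27) = 9 := by
    rw [hB, hσ]
    generalize Real.sqrt (2 * m ^ 2 + 18 * m + 27) = s at hsq hsne ⊢
    field_simp
    linear_combination (-9) * hsq
  have hA3 : A ^ 3 * (2 * m + 3) * (m + 3) + 9 * (α / (m + 1)) = 0 := by
    field_simp
    linear_combination hA
  -- calculus
  have h1 : ∀ t, HasDerivAt y (A * (y t) ^ p + B * y t) t := by
    intro t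
    have hd := ((hy.differentiable (by simp)) t).hasDerivAt
    rwa [heq t] at hd
  set e1 : ℝ → ℝ := fun t => A * (y t) ^ p + B * y t with he1
  have hD1 : deriv y = e1 := funext fun t => heq t
  have h2 : ∀ t, HasDerivAt e1 (A * (e1 t * p * (y t) ^ (p - 1)) + B * e1 t) t := by
    intro t
    exact (((h1 t).rpow_const (Or.inl (hypos t).ne')).const_mul A).add
      ((h1 t).const_mul B)
  set e2 : ℝ → ℝ := fun t => A * (e1 t * p * (y t) ^ (p - 1)) + B * e1 t with he2
  have hD2 : deriv e1 = e2 := funext fun t => (h2 t).deriv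
  have h3 : ∀ t, HasDerivAt e2
      (A * ((A * (e1 t * p * (y t) ^ (p - 1)) + B * e1 t) * p * (y t) ^ (p - 1)
        + e1 t * p * (e1 t * (p - 1) * (y t) ^ (p - 2)))
       + B * (A * (e1 t * p * (y t) ^ (p - 1)) + B * e1 t)) t := by
    intro t
    have hpow : HasDerivAt (fun t => (y t) ^ (p - 1) : ℝ → ℝ)
        (e1 t * (p - 1) * (y t) ^ (p - 1 - 1)) t :=
      (h1 t).rpow_const (Or.inl (hypos t).ne')
    have hpow' : HasDerivAt (fun t => (y t) ^ (p - 1) : ℝ → ℝ)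
        (e1 t * (p - 1) * (y t) ^ (p - 2)) t := by
      convert hpow using 2; ring_nf
    have hmul : HasDerivAt (fun t => e1 t * p * (y t) ^ (p - 1))
        ((A * (e1 t * p * (y t) ^ (p - 1)) + B * e1 t) * p * (y t) ^ (p - 1)
          + e1 t * p * (e1 t * (p - 1) * (y t) ^ (p - 2))) t := by
      exact ((h2 t).mul_const p).mul hpow'
    exact (hmul.const_mul A).add ((h2 t).const_mul B)
  have hD3 : deriv e2 = fun t =>
      A * ((A * (e1 t * p * (y t) ^ (p - 1)) + B * e1 t) * p * (y t) ^ (p - 1)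
        + e1 t * p * (e1 t * (p - 1) * (y t) ^ (p - 2)))
       + B * (A * (e1 t * p * (y t) ^ (p - 1)) + B * e1 t) :=
    funext fun t => (h3 t).deriv
  intro z
  have hu : (0 : ℝ) < y z := hypos z
  -- rewrite all derivatives
  have hit : deriv^[3] y z = deriv (deriv (deriv y)) z := by
    simp [Function.iterate_succ, Function.comp]
  rw [hit, hD1, hD2, hD3]
  -- rpow relations
  have hw : (y z) ^ (p - 1) = y z * (y z) ^ (p - 2) := by
    rw [show p - 1 = (p - 2) + 1 by ring, Real.rpow_add hu, Real.rpow_one]; ring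
  have hv : (y z) ^ p = y z * (y z) ^ (p - 1) := by
    rw [show p = (p - 1) + 1 by ring, Real.rpow_add hu, Real.rpow_one]; ring
  have hq : (y z) ^ (m + 1 : ℝ) = (y z) ^ p * (y z) ^ (p - 1) * (y z) ^ (p - 1) := by
    rw [← Real.rpow_add hu, ← Real.rpow_add hu]
    congr 1
    rw [hp]; ring
  have := key_algebra m σ B C₀ A (α / (m + 1)) (y z) ((y z) ^ (p - 2))
    ((y z) ^ (p - 1)) ((y z) ^ p) ((y z) ^ (m + 1 : ℝ))
    hσ' hB2 hC₀ hA3 hw hv hq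
  rw [← hp] at this
  simp only [he1, he2]
  exact this
end

section
/- The real constant C₀ = ∓60/(47√47) and σ = ±12/√47 together with C = ±(√47/30)·(-225α)^(1/3) yield: for any real constant C₁, the function y(z) = (C + C₁·exp(±z/√47))^(-3), on any interval where C + C₁ exp(±z/√47) > 0, satisfies y''' + σ y'' + y' - C₀ y + (α/2) y² = 0. -/
/-!
With `k = ±1/√47`, the function `G = (C + C₁ exp (k z))⁻¹` solves the Riccati equation
`G' = k (C G² - G)`. Hence every derivative of `y = G³` is a polynomial in `G`, obtained by
iterating `Q ↦ Q' · (k C X² - k X)`, and the Kuramoto–Sivashinsky expression becomes a polynomial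
in `G` whose coefficients vanish because `k² = 1/47` and `α = -120 (k C)³`.
-/

open Polynomial Set Filter

section

variable {𝕜 : Type*} [NontriviallyNormedField 𝕜]

/-- If `G' = P(G)`, then `(Q ∘ G)' = (lieDeriv P Q) ∘ G`. -/
noncomputable def lieDeriv (P Q : 𝕜[X]) : 𝕜[X] := derivative Q * P

theorem hasDerivAt_eval_comp {G : 𝕜 → 𝕜} {P : 𝕜[X]} {z : 𝕜}
    (hG : HasDerivAt G (P.eval (G z)) z) (Q : 𝕜[X]) :
    HasDerivAt (fun x => Q.eval (G x)) ((lieDeriv P Q).eval (G z)) z := by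
  rw [lieDeriv, eval_mul]
  exact (Q.hasDerivAt (G z)).comp z hG

theorem eqOn_iterate_deriv_eval_comp {G : 𝕜 → 𝕜} {P : 𝕜[X]} {U : Set 𝕜} (hU : IsOpen U)
    (hG : ∀ z ∈ U, HasDerivAt G (P.eval (G z)) z) (Q : 𝕜[X]) (n : ℕ) :
    EqOn (deriv^[n] fun x => Q.eval (G x)) (fun x => ((lieDeriv P)^[n] Q).eval (G x)) U := by
  induction n with
  | zero => intro z _; rfl
  | succ n ih =>
    intro z hz
    rw [Function.iterate_succ_apply', Function.iterate_succ_apply']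
    exact (EventuallyEq.deriv_eq (eventuallyEq_of_mem (hU.mem_nhds hz) ih)).trans
      (hasDerivAt_eval_comp (hG z hz) _).deriv

end

noncomputable def riccatiField (k a : ℝ) : ℝ[X] := Polynomial.C (k * a) * X ^ 2 - Polynomial.C k * X

theorem hasDerivAt_inv_const_add_mul_exp (a b k z : ℝ) (hz : a + b * Real.exp (k * z) ≠ 0) :
    HasDerivAt (fun x => (a + b * Real.exp (k * x))⁻¹)
      ((riccatiField k a).eval (a + b * Real.exp (k * z))⁻¹) z := by
  have hF : HasDerivAt (fun x => a + b * Real.exp (k * x)) (b * (Real.exp (k * z) * k)) z :=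
    (((hasDerivAt_id z).const_mul k).exp.congr_deriv (by simp)).const_mul b |>.const_add a
  refine (hF.fun_inv hz).congr_deriv ?_
  simp only [riccatiField, map_mul, eval_sub, eval_mul, eval_C, eval_pow, eval_X, inv_pow]
  field_simp
  ring

theorem kuramotoSivashinsky_eval_lieDeriv_riccatiField (k a α g : ℝ) (hk : k ^ 2 = 1 / 47)
    (hα : α = -120 * (k * a) ^ 3) :
    ((lieDeriv (riccatiField k a))^[3] (X ^ 3)).eval g
      + 12 * k * ((lieDeriv (riccatiField k a))^[2] (X ^ 3)).eval g
      + ((lieDeriv (riccatiField k a))^[1] (X ^ 3)).eval g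
      - (-60 * k / 47) * (X ^ 3 : ℝ[X]).eval g + α / 2 * ((X ^ 3 : ℝ[X]).eval g) ^ 2 = 0 := by
  simp only [riccatiField, Function.iterate_succ_apply', Function.iterate_zero_apply, lieDeriv,
    map_mul, derivative_mul, derivative_sub, derivative_X_pow_succ, derivative_X, derivative_C,
    derivative_one, derivative_zero, Nat.cast_ofNat, Nat.cast_one, map_add, map_one, eval_mul,
    eval_add, eval_sub, eval_pow, eval_X, eval_C, eval_one, eval_zero]
  subst hα
  linear_combination (81 * g ^ 3 - 141 * a * g ^ 4) * k * hk

theorem kuramoto_sivashinsky_kink_general (α s C₀ σ c C C₁ : ℝ)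
    (hs : s = 1 ∨ s = -1)
    (hC₀ : C₀ = -s * 60 / (47 * Real.sqrt 47))
    (hσ : σ = s * 12 / Real.sqrt 47)
    (hc : c ^ 3 = -225 * α)
    (hC : C = s * (Real.sqrt 47 / 30) * c)
    (y : ℝ → ℝ)
    (hy : ∀ z, y z = (C + C₁ * Real.exp (s * z / Real.sqrt 47)) ^ (-3 : ℤ)) :
    ∀ z, C + C₁ * Real.exp (s * z / Real.sqrt 47) > 0 →
      deriv^[3] y z + σ * deriv (deriv y) z + deriv y z - C₀ * y z
        + (α / 2) * (y z) ^ 2 = 0 := by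
  intro z hz
  have hsqrt : Real.sqrt 47 ^ 2 = 47 := Real.sq_sqrt (by norm_num)
  have hs2 : s ^ 2 = 1 := by rcases hs with rfl | rfl <;> norm_num
  set k := s / Real.sqrt 47 with hk
  simp only [show ∀ x, s * x / Real.sqrt 47 = k * x from fun x => mul_div_right_comm ..] at hy hz
  have hk2 : k ^ 2 = 1 / 47 := by rw [hk, div_pow, hs2, hsqrt]
  have hα : α = -120 * (k * C) ^ 3 := by
    have hkC : k * C = c / 30 := by
      rw [hk, hC]; field_simp; linear_combination c * hs2
    rw [hkC]; linear_combination hc / 225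
  set F := fun x => C + C₁ * Real.exp (k * x)
  have hU : IsOpen {x | 0 < F x} := isOpen_lt continuous_const (by fun_prop)
  have hG (x : ℝ) (hx : x ∈ {x | 0 < F x}) := hasDerivAt_inv_const_add_mul_exp C C₁ k x hx.ne'
  have hyG : y = fun x => (X ^ 3 : ℝ[X]).eval (F x)⁻¹ := by
    funext x; rw [hy, eval_pow, eval_X, zpow_neg, inv_pow]; rfl
  have hD := eqOn_iterate_deriv_eval_comp hU hG (X ^ 3)
  rw [show deriv (deriv y) = deriv^[2] y from rfl, show deriv y = deriv^[1] y from rfl, hyG,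
    hD 3 hz, hD 2 hz, hD 1 hz, hσ, hC₀]
  convert kuramotoSivashinsky_eval_lieDeriv_riccatiField k C α (F z)⁻¹ hk2 hα using 3
  · rw [hk]; ring
  · rw [hk]; field_simp

theorem kuramoto_sivashinsky_kink (α s C₀ σ c C C₁ : ℝ) (hα : α ≠ 0)
    (hs : s = 1 ∨ s = -1)
    (hC₀ : C₀ = -s * 60 / (47 * Real.sqrt 47))
    (hσ : σ = s * 12 / Real.sqrt 47)
    (hc : c ^ 3 = -225 * α)
    (hC : C = s * (Real.sqrt 47 / 30) * c)
    (y : ℝ → ℝ)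
    (hy : ∀ z, y z = (C + C₁ * Real.exp (s * z / Real.sqrt 47)) ^ (-3 : ℤ)) :
    ∀ z, C + C₁ * Real.exp (s * z / Real.sqrt 47) > 0 →
      deriv^[3] y z + σ * deriv (deriv y) z + deriv y z - C₀ * y z
        + (α / 2) * (y z) ^ 2 = 0 :=
  kuramoto_sivashinsky_kink_general α s C₀ σ c C C₁ hs hC₀ hσ hc hC y hy
end

section
/- Let b ≠ 0 be a real constant and let Y : ℝ → ℝ be three-times differentiable satisfying Y''' + 2b·Y·Y'' - b·(Y')² - 6b²·Y²·Y' - 3b³·Y⁴ + z/(2b) = 0. Then w(z) = b·Y(z) satisfies w'''' - 10·w²·w'' - 10·w·(w')² + 6·w⁵ - z·w - β = 0 with β = -1/2, and w(z) = -b·Y(z) satisfies the same equation with β = 1/2. -/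
theorem fifth_mkdv_selfsimilar (b : ℝ) (hb : b ≠ 0) (Y : ℝ → ℝ)
    (hY : ContDiff ℝ (⊤ : ℕ∞) Y)
    (heq : ∀ z, deriv^[3] Y z + 2 * b * Y z * deriv (deriv Y) z - b * (deriv Y z) ^ 2
      - 6 * b ^ 2 * (Y z) ^ 2 * deriv Y z - 3 * b ^ 3 * (Y z) ^ 4 + z / (2 * b) = 0) :
    (∀ z, deriv^[4] (fun z => b * Y z) z
        - 10 * (b * Y z) ^ 2 * deriv (deriv (fun z => b * Y z)) z
        - 10 * (b * Y z) * (deriv (fun z => b * Y z) z) ^ 2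
        + 6 * (b * Y z) ^ 5 - z * (b * Y z) - (-1 / 2) = 0)
    ∧ (∀ z, deriv^[4] (fun z => -b * Y z) z
        - 10 * (-b * Y z) ^ 2 * deriv (deriv (fun z => -b * Y z)) z
        - 10 * (-b * Y z) * (deriv (fun z => -b * Y z) z) ^ 2
        + 6 * (-b * Y z) ^ 5 - z * (-b * Y z) - (1 / 2) = 0) := by
  have hY' : ContDiff ℝ (⊤ : ℕ∞) Y := hY.of_le (mod_cast le_top)
  have hdiff : ∀ n : ℕ, Differentiable ℝ (deriv^[n] Y) := fun n =>
    (hY'.iterate_deriv n).differentiable (by simp)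
  -- constant multiples commute with iterated derivatives
  have hmul : ∀ (c : ℝ) (n : ℕ) (z : ℝ), deriv^[n] (fun z => c * Y z) z = c * deriv^[n] Y z := by
    intro c n
    induction n with
    | zero => intro z; simp
    | succ k ih =>
      intro z
      rw [Function.iterate_succ_apply', Function.iterate_succ_apply']
      have h : deriv^[k] (fun z => c * Y z) = fun z => c * deriv^[k] Y z := funext ih
      rw [h, deriv_const_mul_field]
  -- basic derivative facts
  have hYd : ∀ z, HasDerivAt Y (deriv Y z) z := fun z => ((hdiff 0) z).hasDerivAt
  have h1 : Differentiable ℝ (deriv Y) := by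
    have := hdiff 1; simpa using this
  have h2 : Differentiable ℝ (deriv (deriv Y)) := by
    have := hdiff 2; simpa [Function.iterate_succ_apply'] using this
  have hD1d : ∀ z, HasDerivAt (deriv Y) (deriv (deriv Y) z) z := fun z => (h1 z).hasDerivAt
  have hD2d : ∀ z, HasDerivAt (deriv (deriv Y)) (deriv^[3] Y z) z := by
    intro z
    have := (h2 z).hasDerivAt
    have h3 : deriv^[3] Y z = deriv (deriv (deriv Y)) z := by
      simp [Function.iterate_succ_apply']
    rw [h3]; exact this
  -- deriv^[3] Y as a closed form from heq
  have hf3 : deriv^[3] Y = fun z =>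
      b * (deriv Y z) ^ 2 + 6 * b ^ 2 * (Y z) ^ 2 * deriv Y z + 3 * b ^ 3 * (Y z) ^ 4
        - 2 * b * Y z * deriv (deriv Y) z - z / (2 * b) := by
    funext z
    have := heq z
    linarith
  -- the fourth derivative
  have key : ∀ z, deriv^[4] Y z =
      b * (2 * deriv Y z * deriv (deriv Y) z)
      + 6 * b ^ 2 * (2 * Y z * deriv Y z * deriv Y z + (Y z) ^ 2 * deriv (deriv Y) z)
      + 3 * b ^ 3 * (4 * (Y z) ^ 3 * deriv Y z)
      - 2 * b * (deriv Y z * deriv (deriv Y) z + Y z * deriv^[3] Y z)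
      - 1 / (2 * b) := by
    intro z
    have h4 : deriv^[4] Y z = deriv (deriv^[3] Y) z := by
      rw [Function.iterate_succ_apply']
    rw [h4]
    have hA : HasDerivAt (fun z => b * (deriv Y z) ^ 2)
        (b * (2 * deriv Y z * deriv (deriv Y) z)) z := by
      have := ((hD1d z).pow 2).const_mul b
      simpa [mul_comm, mul_assoc, mul_left_comm] using this
    have hB : HasDerivAt (fun z => 6 * b ^ 2 * ((Y z) ^ 2 * deriv Y z))
        (6 * b ^ 2 * ((2 * Y z * deriv Y z) * deriv Y z + (Y z) ^ 2 * deriv (deriv Y) z)) z := by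
      have := (((hYd z).pow 2).mul (hD1d z)).const_mul (6 * b ^ 2)
      simpa [mul_comm, mul_assoc, mul_left_comm] using this
    have hC : HasDerivAt (fun z => 3 * b ^ 3 * (Y z) ^ 4)
        (3 * b ^ 3 * (4 * (Y z) ^ 3 * deriv Y z)) z := by
      have := ((hYd z).pow 4).const_mul (3 * b ^ 3)
      simpa [mul_comm, mul_assoc, mul_left_comm] using this
    have hD : HasDerivAt (fun z => 2 * b * (Y z * deriv (deriv Y) z))
        (2 * b * (deriv Y z * deriv (deriv Y) z + Y z * deriv^[3] Y z)) z := by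
      have := ((hYd z).mul (hD2d z)).const_mul (2 * b)
      simpa [mul_comm, mul_assoc, mul_left_comm] using this
    have hE : HasDerivAt (fun z : ℝ => z / (2 * b)) (1 / (2 * b)) z := by
      simpa [one_div] using (hasDerivAt_id z).div_const (2 * b)
    have htot : HasDerivAt (fun z =>
        b * (deriv Y z) ^ 2 + 6 * b ^ 2 * (Y z) ^ 2 * deriv Y z + 3 * b ^ 3 * (Y z) ^ 4
          - 2 * b * Y z * deriv (deriv Y) z - z / (2 * b))
        (b * (2 * deriv Y z * deriv (deriv Y) z)
          + 6 * b ^ 2 * (2 * Y z * deriv Y z * deriv Y z + (Y z) ^ 2 * deriv (deriv Y) z)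
          + 3 * b ^ 3 * (4 * (Y z) ^ 3 * deriv Y z)
          - 2 * b * (deriv Y z * deriv (deriv Y) z + Y z * deriv^[3] Y z)
          - 1 / (2 * b)) z := by
      have := (((hA.add hB).add hC).sub hD).sub hE
      refine this.congr_of_eventuallyEq (Filter.Eventually.of_forall fun x => ?_)
      simp only [Pi.add_apply, Pi.sub_apply]; ring
    simp only [hf3] at htot ⊢
    exact htot.deriv
  -- rewrite the second derivative terms of c • Y
  have hsnd : ∀ (c : ℝ) (z : ℝ),
      deriv (deriv (fun z => c * Y z)) z = c * deriv (deriv Y) z := by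
    intro c z
    have := hmul c 2 z
    simpa [Function.iterate_succ_apply'] using this
  have hfst : ∀ (c : ℝ) (z : ℝ), deriv (fun z => c * Y z) z = c * deriv Y z := by
    intro c z
    exact deriv_const_mul_field c
  constructor
  · intro z
    rw [hmul b 4 z, hsnd b z, hfst b z, key z, hf3]
    have hr := heq z
    simp only [hf3] at hr ⊢
    field_simp
    ring
  · intro z
    rw [hmul (-b) 4 z, hsnd (-b) z, hfst (-b) z, key z, hf3]
    have hr := heq z
    simp only [hf3] at hr ⊢
    field_simp
    ring
end

section
/- Let ε ≠ 0, δ, C₀, a ∈ ℝ and choose a sign s ∈ {+1, -1}. Let b = -a²/12 + δ²/(1452ε²) + s·√21·δ²/(5082ε²) and d = a³/108 + 13δ³/(359370ε³) + s·√21·δ³/(119790ε³) - aδ²/(4356ε²) - s·√21·aδ²/(15246ε²). Suppose R : ℝ → ℝ satisfies (R')² = -2R³ + aR² + 2bR + d and R'' = -3R² + aR + b. Then y(z) = C₀ + 630·(εa + δ/11 - 6ε·R(z))·R'(z) satisfies C₁ - C₀y + (1/2)y² + βy' + δy''' + εy''''' = 0, where β = 10δ²/(121ε) and C₁ = -10854δ⁵/(161051ε³)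 + (1/2)C₀² - s·2484√21·δ⁵/(161051ε³). -/
private lemma aux1 (R : ℝ → ℝ) (hR : Differentiable ℝ R) (c0 c1 c2 c3 c4 z : ℝ) :
    HasDerivAt (fun x => c0 + c1 * R x + c2 * R x ^ 2 + c3 * R x ^ 3 + c4 * R x ^ 4)
      (c1 * deriv R z + 2 * c2 * R z * deriv R z + 3 * c3 * R z ^ 2 * deriv R z
        + 4 * c4 * R z ^ 3 * deriv R z) z := by
  have h : HasDerivAt R (deriv R z) z := (hR z).hasDerivAt
  have H := ((((h.const_mul c1).const_add c0).add ((h.pow 2).const_mul c2)).add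
      ((h.pow 3).const_mul c3)).add ((h.pow 4).const_mul c4)
  exact H.congr_deriv (by simp only [Pi.add_apply, Pi.pow_apply, Nat.cast_ofNat, Nat.reduceSub]; ring)

private lemma aux2 (R : ℝ → ℝ) (hR : Differentiable ℝ R) (hR' : Differentiable ℝ (deriv R))
    (e c0 c1 c2 c3 z : ℝ) :
    HasDerivAt (fun x => e + (c0 + c1 * R x + c2 * R x ^ 2 + c3 * R x ^ 3) * deriv R x)
      ((c1 * deriv R z + 2 * c2 * R z * deriv R z + 3 * c3 * R z ^ 2 * deriv R z) * deriv R z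
        + (c0 + c1 * R z + c2 * R z ^ 2 + c3 * R z ^ 3) * deriv (deriv R) z) z := by
  have h : HasDerivAt R (deriv R z) z := (hR z).hasDerivAt
  have h' : HasDerivAt (deriv R) (deriv (deriv R) z) z := (hR' z).hasDerivAt
  have H := (((((h.const_mul c1).const_add c0).add ((h.pow 2).const_mul c2)).add
      ((h.pow 3).const_mul c3)).mul h').const_add e
  exact H.congr_deriv (by simp only [Pi.add_apply, Pi.pow_apply, Nat.cast_ofNat, Nat.reduceSub]; ring)

theorem sixth_order_periodic_solution (ε δ C₀ a s b d β C₁ : ℝ) (hε : ε ≠ 0)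
    (hs : s = 1 ∨ s = -1)
    (hb : b = -a ^ 2 / 12 + δ ^ 2 / (1452 * ε ^ 2)
      + s * Real.sqrt 21 * δ ^ 2 / (5082 * ε ^ 2))
    (hd : d = a ^ 3 / 108 + 13 * δ ^ 3 / (359370 * ε ^ 3)
      + s * Real.sqrt 21 * δ ^ 3 / (119790 * ε ^ 3)
      - a * δ ^ 2 / (4356 * ε ^ 2)
      - s * Real.sqrt 21 * a * δ ^ 2 / (15246 * ε ^ 2))
    (hβ : β = 10 * δ ^ 2 / (121 * ε))
    (hC₁ : C₁ = -10854 * δ ^ 5 / (161051 * ε ^ 3) + (1 / 2) * C₀ ^ 2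
      - s * 2484 * Real.sqrt 21 * δ ^ 5 / (161051 * ε ^ 3))
    (R : ℝ → ℝ) (hR : ContDiff ℝ (⊤ : ℕ∞) R)
    (hfirst : ∀ z, (deriv R z) ^ 2
      = -2 * (R z) ^ 3 + a * (R z) ^ 2 + 2 * b * R z + d)
    (hsecond : ∀ z, deriv (deriv R) z = -3 * (R z) ^ 2 + a * R z + b)
    (y : ℝ → ℝ)
    (hy : ∀ z, y z = C₀ + 630 * (ε * a + δ / 11 - 6 * ε * R z) * deriv R z) :
    ∀ z, C₁ - C₀ * y z + (1 / 2) * (y z) ^ 2 + β * deriv y z + δ * deriv^[3] y z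
      + ε * deriv^[5] y z = 0 := by
  intro z
  have hRd : Differentiable ℝ R := hR.differentiable (by simp)
  have hRinf : ContDiff ℝ ((⊤ : ℕ∞) : WithTop ℕ∞) R := hR.of_le (by simp)
  have hR1d : Differentiable ℝ (deriv R) :=
    ((contDiff_infty_iff_deriv.mp hRinf).2).differentiable (by simp)
  have hs2 : s ^ 2 = 1 := by rcases hs with h | h <;> rw [h] <;> norm_num
  have hw : Real.sqrt 21 ^ 2 = 21 := Real.sq_sqrt (by norm_num)
  have hδε : δ = (δ / ε) * ε := (div_mul_cancel₀ δ hε).symm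
  have hb' : b = -a ^ 2 / 12 + (δ / ε) ^ 2 / 1452 + s * Real.sqrt 21 * (δ / ε) ^ 2 / 5082 := by
    rw [hb]; field_simp
  have hd' : d = a ^ 3 / 108 + 13 * (δ / ε) ^ 3 / 359370 + s * Real.sqrt 21 * (δ / ε) ^ 3 / 119790
      - a * (δ / ε) ^ 2 / 4356 - s * Real.sqrt 21 * a * (δ / ε) ^ 2 / 15246 := by
    rw [hd]; field_simp
  have hβ' : β = 10 * (δ / ε) ^ 2 * ε / 121 := by rw [hβ]; field_simp
  have hC₁' : C₁ = -10854 * (δ / ε) ^ 5 * ε ^ 2 / 161051 + (1 / 2) * C₀ ^ 2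
      - 2484 * s * Real.sqrt 21 * (δ / ε) ^ 5 * ε ^ 2 / 161051 := by
    rw [hC₁]; field_simp
  have hyf : y = fun x => C₀ + (((630/11) * δ + 630 * ε * a) + (-3780 * ε) * R x + 0 * R x ^ 2 + 0 * R x ^ 3) * deriv R x := by
    funext x; rw [hy x]; ring
  have hy1 : ∀ x, deriv y x = ((630/11) * δ * b - 3780 * ε * d + 630 * ε * a * b) + ((630/11) * δ * a - 11340 * ε * b + 630 * ε * a ^ 2) * R x + (-(1890/11) * δ - 9450 * ε * a) * R x ^ 2 + (18900 * ε) * R x ^ 3 + 0 * R x ^ 4 := by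
    intro x
    rw [hyf, (aux2 R hRd hR1d C₀ ((630/11) * δ + 630 * ε * a) (-3780 * ε) 0 0 x).deriv, hsecond x]
    linear_combination (-3780 * ε) * hfirst x
  have hy1f : deriv y = fun x => ((630/11) * δ * b - 3780 * ε * d + 630 * ε * a * b) + ((630/11) * δ * a - 11340 * ε * b + 630 * ε * a ^ 2) * R x + (-(1890/11) * δ - 9450 * ε * a) * R x ^ 2 + (18900 * ε) * R x ^ 3 + 0 * R x ^ 4 := funext hy1
  have hy2 : ∀ x, deriv (deriv y) x
      = 0 + (((630/11) * δ * a - 11340 * ε * b + 630 * ε * a ^ 2) + (-(3780/11) * δ - 18900 * ε * a) * R x + (56700 * ε) * R x ^ 2 + 0 * R x ^ 3) * deriv R x := by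
    intro x
    rw [hy1f, (aux1 R hRd ((630/11) * δ * b - 3780 * ε * d + 630 * ε * a * b) ((630/11) * δ * a - 11340 * ε * b + 630 * ε * a ^ 2) (-(1890/11) * δ - 9450 * ε * a) (18900 * ε) 0 x).deriv]
    ring
  have hy2f : deriv (deriv y) = fun x => 0 + (((630/11) * δ * a - 11340 * ε * b + 630 * ε * a ^ 2) + (-(3780/11) * δ - 18900 * ε * a) * R x + (56700 * ε) * R x ^ 2 + 0 * R x ^ 3) * deriv R x := funext hy2
  have hy3 : ∀ x, deriv (deriv (deriv y)) x = (-(3780/11) * δ * d + (630/11) * δ * a * b - 11340 * ε * b ^ 2 - 18900 * ε * a * d + 630 * ε * a ^ 2 * b) + (-(11340/11) * δ * b + (630/11) * δ * a ^ 2 + 113400 * ε * d - 68040 * ε * a * b + 630 * ε * a ^ 3) * R x + (-(9450/11) * δ * a + 317520 * ε * b - 39690 * ε * a ^ 2) * R x ^ 2 + ((18900/11) * δ + 264600 * ε * a) * R x ^ 3 + (-396900 * ε) * R x ^ 4 := by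
    intro x
    rw [hy2f, (aux2 R hRd hR1d 0 ((630/11) * δ * a - 11340 * ε * b + 630 * ε * a ^ 2) (-(3780/11) * δ - 18900 * ε * a) (56700 * ε) 0 x).deriv, hsecond x]
    linear_combination (-(3780/11) * δ + 113400 * ε * (R x) - 18900 * ε * a) * hfirst x
  have hy3f : deriv (deriv (deriv y)) = fun x => (-(3780/11) * δ * d + (630/11) * δ * a * b - 11340 * ε * b ^ 2 - 18900 * ε * a * d + 630 * ε * a ^ 2 * b) + (-(11340/11) * δ * b + (630/11) * δ * a ^ 2 + 113400 * ε * d - 68040 * ε * a * b + 630 * ε * a ^ 3) * R x + (-(9450/11) * δ * a + 317520 * ε * b - 39690 * ε * a ^ 2) * R x ^ 2 + ((18900/11) * δ + 264600 * ε * a) * R x ^ 3 + (-396900 * ε) * R x ^ 4 := funext hy3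
  have hy4 : ∀ x, deriv (deriv (deriv (deriv y))) x
      = 0 + ((-(11340/11) * δ * b + (630/11) * δ * a ^ 2 + 113400 * ε * d - 68040 * ε * a * b + 630 * ε * a ^ 3) + (-(18900/11) * δ * a + 635040 * ε * b - 79380 * ε * a ^ 2) * R x + ((56700/11) * δ + 793800 * ε * a) * R x ^ 2 + (-1587600 * ε) * R x ^ 3) * deriv R x := by
    intro x
    rw [hy3f, (aux1 R hRd (-(3780/11) * δ * d + (630/11) * δ * a * b - 11340 * ε * b ^ 2 - 18900 * ε * a * d + 630 * ε * a ^ 2 * b) (-(11340/11) * δ * b + (630/11) * δ * a ^ 2 + 113400 * ε * d - 68040 * ε * a * b + 630 * ε * a ^ 3) (-(9450/11) * δ * a + 317520 * ε * b - 39690 * ε * a ^ 2) ((18900/11) * δ + 264600 * ε * a) (-396900 * ε) x).deriv]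
    ring
  have hy4f : deriv (deriv (deriv (deriv y))) = fun x => 0 + ((-(11340/11) * δ * b + (630/11) * δ * a ^ 2 + 113400 * ε * d - 68040 * ε * a * b + 630 * ε * a ^ 3) + (-(18900/11) * δ * a + 635040 * ε * b - 79380 * ε * a ^ 2) * R x + ((56700/11) * δ + 793800 * ε * a) * R x ^ 2 + (-1587600 * ε) * R x ^ 3) * deriv R x := funext hy4
  have hy5 : ∀ x, deriv (deriv (deriv (deriv (deriv y)))) x = (-(11340/11) * δ * b ^ 2 - (18900/11) * δ * a * d + (630/11) * δ * a ^ 2 * b + 748440 * ε * b * d - 68040 * ε * a * b ^ 2 - 79380 * ε * a ^ 2 * d + 630 * ε * a ^ 3 * b) + ((113400/11) * δ * d - (68040/11) * δ * a * b + (630/11) * δ * a ^ 3 + 1905120 * ε * b ^ 2 + 1701000 * ε * a * d - 306180 * ε * a ^ 2 * b + 630 * ε * a ^ 4) * R x + ((317520/11) * δ * b - (39690/11) * δ * a ^ 2 - 5103000 * ε * d + 5443200 * ε * a * b - 160650 * ε * a ^ 3) * R x ^ 2 + ((264600/11) * δ * a - 14288400 * ε * b + 2778300 * ε * a ^ 2)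 * R x ^ 3 + (-(396900/11) * δ - 11907000 * ε * a) * R x ^ 4 + (14288400 * ε) * R x ^ 5 := by
    intro x
    rw [hy4f, (aux2 R hRd hR1d 0 (-(11340/11) * δ * b + (630/11) * δ * a ^ 2 + 113400 * ε * d - 68040 * ε * a * b + 630 * ε * a ^ 3) (-(18900/11) * δ * a + 635040 * ε * b - 79380 * ε * a ^ 2) ((56700/11) * δ + 793800 * ε * a) (-1587600 * ε) x).deriv, hsecond x]
    linear_combination ((113400/11) * δ * (R x) - (18900/11) * δ * a - 4762800 * ε * (R x) ^ 2 + 635040 * ε * b + 1587600 * ε * a * (R x) - 79380 * ε * a ^ 2) * hfirst x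
  have e3 : deriv^[3] y z = (-(3780/11) * δ * d + (630/11) * δ * a * b - 11340 * ε * b ^ 2 - 18900 * ε * a * d + 630 * ε * a ^ 2 * b) + (-(11340/11) * δ * b + (630/11) * δ * a ^ 2 + 113400 * ε * d - 68040 * ε * a * b + 630 * ε * a ^ 3) * R z + (-(9450/11) * δ * a + 317520 * ε * b - 39690 * ε * a ^ 2) * R z ^ 2 + ((18900/11) * δ + 264600 * ε * a) * R z ^ 3 + (-396900 * ε) * R z ^ 4 := hy3 z
  have e5 : deriv^[5] y z = (-(11340/11) * δ * b ^ 2 - (18900/11) * δ * a * d + (630/11) * δ * a ^ 2 * b + 748440 * ε * b * d - 68040 * ε * a * b ^ 2 - 79380 * ε * a ^ 2 * d + 630 * ε * a ^ 3 * b) + ((113400/11) * δ * d - (68040/11) * δ * a * b + (630/11) * δ * a ^ 3 + 1905120 * ε * b ^ 2 + 1701000 * ε * a * d - 306180 * ε * a ^ 2 * b + 630 * ε * a ^ 4) * R z + ((317520/11) * δ * b - (39690/11) * δ * a ^ 2 - 5103000 * ε * d + 5443200 * ε * a * b - 160650 * ε * a ^ 3) * R z ^ 2 + ((264600/11) * δ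 * a - 14288400 * ε * b + 2778300 * ε * a ^ 2) * R z ^ 3 + (-(396900/11) * δ - 11907000 * ε * a) * R z ^ 4 + (14288400 * ε) * R z ^ 5 := hy5 z
  rw [hy z, hy1 z, e3, e5]
  linear_combination ((198450/121) * δ ^ 2 - (2381400/11) * ε * δ * (R z) + (396900/11) * ε * δ * a + 7144200 * ε ^ 2 * (R z) ^ 2 - 2381400 * ε ^ 2 * a * (R z) + 198450 * ε ^ 2 * a ^ 2) * hfirst z
    + hC₁'
    + (-(1890/11) * δ * (R z) ^ 2 + (630/11) * δ * b + (630/11) * δ * a * (R z) + 18900 * ε * (R z) ^ 3 - 3780 * ε * d - 11340 * ε * b * (R z) - 9450 * ε * a * (R z) ^ 2 + 630 * ε * a * b + 630 * ε * a ^ 2 * (R z)) * hβ'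
    + ((272160/121) * δ ^ 2 * (R z) + (630/11) * δ ^ 2 * a - (952560/11) * ε * δ * (R z) ^ 2 - (5040/1331) * ε * δ * ((δ / ε)) ^ 2 - (3240/1331) * ε * δ * s * (Real.sqrt 21) * ((δ / ε)) ^ 2 - (136080/11) * ε * δ * b - (22680/11) * ε * δ * a * (R z) + (18900/11) * ε * δ * a ^ 2 + (45360/121) * ε ^ 2 * ((δ / ε)) ^ 2 * (R z) + (45360/121) * ε ^ 2 * s * (Real.sqrt 21) * ((δ / ε)) ^ 2 * (R z) + 748440 * ε ^ 2 * d + 1905120 * ε ^ 2 * b * (R z) + 680400 * ε ^ 2 * a * (R z) ^ 2 + (630/121) * ε ^ 2 * a * ((δ / ε)) ^ 2 - (1620/121) * ε ^ 2 * a * s * (Real.sqrt 21) * ((δ / ε)) ^ 2 - 68040 * ε ^ 2 * a * b - 68040 * ε ^ 2 * a ^ 2 * (R z) + 6300 * ε ^ 2 * a ^ 3) * hb'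
    + ((156870/121) * δ ^ 2 - (1020600/11) * ε * δ * (R z) + (170100/11) * ε * δ * a + 2041200 * ε ^ 2 * (R z) ^ 2 + (24570/121) * ε ^ 2 * ((δ / ε)) ^ 2 + (1620/11) * ε ^ 2 * s * (Real.sqrt 21) * ((δ / ε)) ^ 2 - 680400 * ε ^ 2 * a * (R z) + 56700 * ε ^ 2 * a ^ 2) * hd'
    + (-(189000/121) * δ * (R z) ^ 3 + (22680/14641) * δ * ((δ / ε)) ^ 2 * (R z) + (7553/161051) * δ * ((δ / ε)) ^ 3 + (6480/14641) * δ * s * (Real.sqrt 21) * ((δ / ε)) ^ 2 * (R z) + (1743/161051) * δ * s * (Real.sqrt 21) * ((δ / ε)) ^ 3 + (94500/121) * δ * a * (R z) ^ 2 - (3780/14641) * δ * a * ((δ / ε)) ^ 2 - (1080/14641) * δ * a * s * (Real.sqrt 21) * ((δ / ε)) ^ 2 - (15750/121) * δ * a ^ 2 * (R z) + (875/121) * δ * a ^ 3 - (189000/121) * ε * ((δ / ε)) * (R z) ^ 3 - (98280/1331) * ε * ((δ / ε)) ^ 2 * (R z) ^ 2 - (26460/14641) * ε * ((δ / ε)) ^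 3 * (R z) + (7133/161051) * ε * ((δ / ε)) ^ 4 - (22680/1331) * ε * s * (Real.sqrt 21) * ((δ / ε)) ^ 2 * (R z) ^ 2 - (4860/14641) * ε * s * (Real.sqrt 21) * ((δ / ε)) ^ 3 * (R z) + (123/14641) * ε * s * (Real.sqrt 21) * ((δ / ε)) ^ 4 - (540/1127357) * ε * s ^ 2 * (Real.sqrt 21) ^ 2 * ((δ / ε)) ^ 4 + (94500/121) * ε * a * ((δ / ε)) * (R z) ^ 2 + (32760/1331) * ε * a * ((δ / ε)) ^ 2 * (R z) + (4410/14641) * ε * a * ((δ / ε)) ^ 3 + (7560/1331) * ε * a * s * (Real.sqrt 21) * ((δ / ε)) ^ 2 * (R z) + (810/14641) * ε * a * s * (Real.sqrt 21) * ((δ / ε)) ^ 3 - (15750/121) * ε * a ^ 2 * ((δ / ε)) * (R z) - (2730/1331) * ε * a ^ 2 * ((δ / ε)) ^ 2 - (630/1331) * ε * a ^ 2 * s * (Real.sqrt 21) * ((δ / ε)) ^ 2 + (875/121) * ε * a ^ 3 * ((δ / ε))) * hδε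
    + ((1080/14641) * ε ^ 2 * s ^ 2 * ((δ / ε)) ^ 4 * (R z) + (846/1127357) * ε ^ 2 * s ^ 2 * ((δ / ε)) ^ 5 - (180/14641) * ε ^ 2 * a * s ^ 2 * ((δ / ε)) ^ 4) * hw
    + ((22680/14641) * ε ^ 2 * ((δ / ε)) ^ 4 * (R z) + (2538/161051) * ε ^ 2 * ((δ / ε)) ^ 5 - (3780/14641) * ε ^ 2 * a * ((δ / ε)) ^ 4) * hs2
end
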